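/- arXiv:0905.4434 — 2 statements merged into one kernel-verified Lean document; each statement's English description precedes it below -/
import Mathlib

section
/- The set of sign vectors of a finite collection of linear hyperplanes in ℝ^ℓ is closed under composition: if X = sign(α(x)) and Y = sign(α(y)) are the sign vectors of points x, y ∈ ℝ^ℓ with respect to linear functionals α_1,…,α_n, then there exists ε > 0 such that for all 0 < t < ε, the sign vector of x + t(y − x) equals X ∘ Y. -/
def svComp {n : ℕ} (X Y : Fin n → SignType) : Fin n → SignType :=
  fun i => if X i = 0 then Y i else X i

/-- The sign vector of a point with respect to linear functionals `α`. -/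
noncomputable def signVec {ℓ n : ℕ} (α : Fin n → ((Fin ℓ → ℝ) →ₗ[ℝ] ℝ)) (x : Fin ℓ → ℝ) :
    Fin n → SignType :=
  fun i => SignType.sign (α i x)

/-- Moving a small step from `x` towards `y` realizes the composition of the sign vectors. -/
theorem signVec_comp {ℓ n : ℕ} (α : Fin n → ((Fin ℓ → ℝ) →ₗ[ℝ] ℝ))
    (x y : Fin ℓ → ℝ) :
    ∃ ε > 0, ∀ t : ℝ, 0 < t → t < ε →
      signVec α (x + t • (y - x)) = svComp (signVec α x) (signVec α y) := by
  have hval : ∀ (i : Fin n) (t : ℝ),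
      α i (x + t • (y - x)) = α i x + t * (α i y - α i x) := by
    intro i t
    have : (t : ℝ) • (y - x) = t • y - t • x := by module
    simp [map_add, map_smul, map_sub, smul_eq_mul, this]
    ring
  have key : ∀ i : Fin n, ∀ᶠ t in nhdsWithin (0:ℝ) (Set.Ioi 0),
      SignType.sign (α i (x + t • (y - x))) = svComp (signVec α x) (signVec α y) i := by
    intro i
    have hc : Filter.Tendsto (fun t : ℝ => α i x + t * (α i y - α i x)) (nhds 0)
        (nhds (α i x)) := by
      have : Continuous (fun t : ℝ => α i x + t * (α i y - α i x)) := by fun_prop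
      simpa using this.tendsto 0
    rcases lt_trichotomy (α i x) 0 with h | h | h
    · have h1 : ∀ᶠ t in nhds (0:ℝ), α i x + t * (α i y - α i x) < 0 :=
        hc.eventually_lt_const h
      filter_upwards [nhdsWithin_le_nhds h1] with t ht
      rw [hval i t, sign_neg ht]
      simp [svComp, signVec, sign_neg h]
    · filter_upwards [self_mem_nhdsWithin] with t (ht : 0 < t)
      rw [hval i t, h]
      simp only [zero_add, sub_zero]
      rw [sign_mul, sign_pos ht]
      simp [svComp, signVec, h]
    · have h1 : ∀ᶠ t in nhds (0:ℝ), 0 < α i x + t * (α i y - α i x) :=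
        hc.eventually_const_lt h
      filter_upwards [nhdsWithin_le_nhds h1] with t ht
      rw [hval i t, sign_pos ht]
      simp [svComp, signVec, sign_pos h]
  have hall : ∀ᶠ t in nhdsWithin (0:ℝ) (Set.Ioi 0), ∀ i : Fin n,
      SignType.sign (α i (x + t • (y - x))) = svComp (signVec α x) (signVec α y) i :=
    Filter.eventually_all.2 key
  rw [Filter.eventually_iff, mem_nhdsGT_iff_exists_Ioo_subset] at hall
  obtain ⟨u, hu, hsub⟩ := hall
  exact ⟨u, hu, fun t ht htu => funext fun i => hsub ⟨ht, htu⟩ i⟩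
end

section
/- The set of sign vectors of points of ℝ^ℓ with respect to a finite set of linear functionals satisfies the elimination axiom (L3): if X = sign vector of x, Y = sign vector of y, and i is such that X_i = −Y_i ≠ 0, then there exists z ∈ ℝ^ℓ whose sign vector Z satisfies Z_i = 0 and Z_j = (X ∘ Y)_j for all j not in the separation set S(X,Y). -/
def svSep {n : ℕ} (X Y : Fin n → SignType) : Set (Fin n) :=
  {i | X i = -(Y i) ∧ X i ≠ 0}

/-- The elimination axiom (L3) for the sign vectors of a real arrangement. -/
theorem signVecs_L3 {ℓ n : ℕ} (α : Fin n → ((Fin ℓ → ℝ) →ₗ[ℝ] ℝ))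
    (x y : Fin ℓ → ℝ) (i : Fin n)
    (hi : signVec α x i = -(signVec α y i)) (hi0 : signVec α x i ≠ 0) :
    ∃ z : Fin ℓ → ℝ, signVec α z i = 0 ∧
      ∀ j ∉ svSep (signVec α x) (signVec α y),
        signVec α z j = svComp (signVec α x) (signVec α y) j := by
  classical
  simp only [signVec] at hi hi0
  set a := α i x with ha
  set b := α i y with hb
  have ha0 : a ≠ 0 := fun h => hi0 (by simp [h])
  have hcase : (0 < a ∧ b < 0) ∨ (a < 0 ∧ 0 < b) := by
    rcases ha0.lt_or_gt with h | h
    · right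
      refine ⟨h, ?_⟩
      rw [sign_neg h] at hi
      rcases lt_trichotomy b 0 with hb1 | hb1 | hb1
      · rw [sign_neg hb1] at hi; exact absurd hi (by decide)
      · rw [hb1] at hi; simp at hi
      · exact hb1
    · left
      refine ⟨h, ?_⟩
      rw [sign_pos h] at hi
      rcases lt_trichotomy b 0 with hb1 | hb1 | hb1
      · exact hb1
      · rw [hb1] at hi; simp at hi
      · rw [sign_pos hb1] at hi; exact absurd hi (by decide)
  have hne : a - b ≠ 0 := by rcases hcase with ⟨h1, h2⟩ | ⟨h1, h2⟩ <;> intro h <;> linarith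
  set t : ℝ := a / (a - b) with htdef
  have ht0 : 0 < t := by
    rcases hcase with ⟨h1, h2⟩ | ⟨h1, h2⟩
    · exact div_pos h1 (by linarith)
    · exact div_pos_of_neg_of_neg h1 (by linarith)
  have ht1 : t < 1 := by
    rcases hcase with ⟨h1, h2⟩ | ⟨h1, h2⟩
    · rw [div_lt_one (by linarith)]; linarith
    · rw [div_lt_one_iff]; right; right; constructor <;> linarith
  refine ⟨x + t • (y - x), ?_, ?_⟩
  · have hz : α i (x + t • (y - x)) = a + t * (b - a) := by
      simp only [map_add, map_smul, map_sub, smul_eq_mul, ← ha, ← hb]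
    have ht : t * (a - b) = a := by
      rw [htdef]; field_simp
    have : a + t * (b - a) = 0 := by linear_combination -ht
    simp [signVec, hz, this]
  · intro j hj
    have hj' : ¬(SignType.sign (α j x) = -SignType.sign (α j y) ∧ SignType.sign (α j x) ≠ 0) := by
      simpa [svSep, signVec, Set.mem_setOf_eq] using hj
    set c := α j x with hc
    set d := α j y with hd
    have hz : α j (x + t • (y - x)) = (1 - t) * c + t * d := by
      simp only [map_add, map_smul, map_sub, smul_eq_mul, ← hc, ← hd]
      ring
    simp only [signVec, svComp, hz, ← hc, ← hd]
    rcases lt_trichotomy c 0 with hc1 | hc1 | hc1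
    · -- c < 0: then sign d ≠ 1, so d ≤ 0
      have hd1 : d ≤ 0 := by
        by_contra hdp
        push_neg at hdp
        exact hj' ⟨by rw [sign_neg hc1, sign_pos hdp], by rw [sign_neg hc1]; decide⟩
      have : (1 - t) * c + t * d < 0 := by nlinarith
      rw [sign_neg this, sign_neg hc1, if_neg (by decide)]
    · have : (1 - t) * c + t * d = t * d := by rw [hc1]; ring
      rw [this, hc1, sign_zero, if_pos rfl]
      rcases lt_trichotomy d 0 with hd1 | hd1 | hd1
      · rw [sign_neg (by nlinarith), sign_neg hd1]
      · simp [hd1]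
      · rw [sign_pos (by nlinarith), sign_pos hd1]
    · have hd1 : 0 ≤ d := by
        by_contra hdp
        push_neg at hdp
        exact hj' ⟨by rw [sign_pos hc1, sign_neg hdp]; decide, by rw [sign_pos hc1]; decide⟩
      have : 0 < (1 - t) * c + t * d := by nlinarith
      rw [sign_pos this, sign_pos hc1, if_neg (by decide)]
end
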